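/- Let B be a nondegenerate alternating bilinear form on a finite-dimensional complex vector space V and let P be nilpotent and self-adjoint with respect to B. Then: (a) if L and L′ are P-invariant Lagrangian subspaces with L ∩ L′ = 0 (hence V = L ⊕ L′), then 2·dim(L ∩ ker P^k) = dim ker P^k for every k ≥ 0; (b) conversely, if L is a P-invariant Lagrangian subspace satisfying 2·dim(L ∩ ker P^k) = dim ker P^k for every k ≥ 0, then there exists a P-invariant Lagrangian subspace L′ with L ∩ L′ = 0. (Thus a P-invariant Lagrangian subspace admits a complementary P-invariant Lagrangian subspace exactly when it is generic.) -/

import Mathlib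

/-!
Both directions pass through purity. For a `P`-invariant Lagrangian `L`, self-adjointness of `Pᵏ`
gives `(L + ker Pᵏ)^⊥ = L ∩ im Pᵏ`, and a dimension count then shows that
`2 · dim (L ∩ ker Pᵏ) = dim ker Pᵏ` holds exactly when `L ∩ im Pᵏ = Pᵏ L`, i.e. when `L` is a pure
submodule of `V` viewed as a `ℂ[P]`-module. An invariant complement makes `L` pure. Conversely, a
pure invariant subspace for a nilpotent `P` has an invariant complement, obtained by repeatedly
adjoining the cyclic subspace of a vector of maximal height over `L`; and an invariant complement
`M` is corrected to a Lagrangian one, the graph of the map `f : M → L` with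
`B (f m) m' = -½ B m m'`, which commutes with `P` because `P` is self-adjoint.
-/

open Module

/-- A `P`-invariant Lagrangian (i.e. bi-Lagrangian) subspace for the pair `(B, P)`. -/
def IsPInvLagrangian {V : Type*} [AddCommGroup V] [Module ℂ V]
    (B : V →ₗ[ℂ] V →ₗ[ℂ] ℂ) (P : V →ₗ[ℂ] V) (L : Submodule ℂ V) : Prop :=
  (∀ u ∈ L, ∀ v ∈ L, B u v = 0) ∧
  2 * finrank ℂ L = finrank ℂ V ∧
  ∀ u ∈ L, P u ∈ L

open LinearMap Submodule

section

variable {K V : Type*} [Field K] [AddCommGroup V] [Module K V]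

lemma Module.End.invtSubmodule.pow {f : Module.End K V} {p : Submodule K V}
    (h : p ∈ f.invtSubmodule) (n : ℕ) : p ∈ (f ^ n).invtSubmodule := by
  rw [mem_invtSubmodule_iff_mapsTo, coe_pow]
  exact ((mem_invtSubmodule_iff_mapsTo f).1 h).iterate n

lemma LinearMap.IsAdjointPair.pow {B : LinearMap.BilinForm K V} {f g : Module.End K V}
    (h : IsAdjointPair B B f g) (n : ℕ) : IsAdjointPair B B ⇑(f ^ n) ⇑(g ^ n) := by
  induction n with
  | zero => exact isAdjointPair_one
  | succ n ih => rw [pow_succ', pow_succ]; exact h.mul ih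

lemma Submodule.finrank_map_add_finrank_inf_ker [FiniteDimensional K V] {W : Type*}
    [AddCommGroup W] [Module K W] (f : V →ₗ[K] W) (S : Submodule K V) :
    finrank K (S.map f) + finrank K ↥(S ⊓ ker f) = finrank K S := by
  rw [← LinearMap.finrank_range_add_finrank_ker (f.domRestrict S), range_domRestrict,
    ker_domRestrict, ← finrank_map_subtype_eq S (comap S.subtype (ker f)),
    map_comap_subtype]

lemma inf_range_le_map_of_isCompl {R E : Type*} [Ring R] [AddCommGroup E] [Module R E]
    {f : Module.End R E} {L N : Submodule R E} (hL : L ∈ f.invtSubmodule)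
    (hN : N ∈ f.invtSubmodule) (hLN : IsCompl L N) : L ⊓ LinearMap.range f ≤ L.map f := by
  rintro _ ⟨hv, u, rfl⟩
  obtain ⟨l, hl, n, hn, rfl⟩ := mem_sup.1 (hLN.codisjoint.eq_top ▸ mem_top : u ∈ L ⊔ N)
  have hfn : f n ∈ L ⊓ N := ⟨by simpa using sub_mem hv (hL hl), hN hn⟩
  rw [hLN.inf_eq_bot, mem_bot] at hfn
  exact ⟨l, hl, by rw [map_add, hfn, add_zero]⟩

lemma isCompl_range_subtype_add_subtype_comp {R E : Type*} [Ring R] [AddCommGroup E] [Module R E]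
    {L N : Submodule R E} (hLN : IsCompl L N) (f : N →ₗ[R] L) :
    IsCompl L (LinearMap.range (N.subtype + L.subtype ∘ₗ f)) := by
  constructor
  · rw [disjoint_def]
    rintro _ hv ⟨n, rfl⟩
    have hn : (n : E) ∈ L ⊓ N := ⟨by simpa using sub_mem hv (f n).2, n.2⟩
    rw [hLN.inf_eq_bot, mem_bot] at hn
    obtain rfl : n = 0 := Subtype.ext hn
    simp
  · rw [codisjoint_iff, eq_top_iff]
    rintro v -
    obtain ⟨l, hl, n, hn, rfl⟩ := mem_sup.1 (hLN.codisjoint.eq_top ▸ mem_top : v ∈ L ⊔ N)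
    exact mem_sup.2 ⟨l - f ⟨n, hn⟩, sub_mem hl (f _).2, _, ⟨⟨n, hn⟩, rfl⟩, by simp⟩

namespace Module.End

def IsPure (P : Module.End K V) (L : Submodule K V) : Prop :=
  ∀ k : ℕ, L ⊓ LinearMap.range (P ^ k) ≤ L.map (P ^ k)

def cyclicSubspace (P : Module.End K V) (z : V) : Submodule K V :=
  span K (Set.range fun i : ℕ ↦ (P ^ i) z)

variable {P : Module.End K V} {z : V}

lemma IsPure.of_isCompl {L M : Submodule K V} (hL : L ∈ P.invtSubmodule)
    (hM : M ∈ P.invtSubmodule) (hLM : IsCompl L M) : P.IsPure L := fun k ↦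
  inf_range_le_map_of_isCompl (invtSubmodule.pow hL k) (invtSubmodule.pow hM k) hLM

lemma self_mem_cyclicSubspace : z ∈ P.cyclicSubspace z :=
  subset_span ⟨0, by simp⟩

lemma cyclicSubspace_mem_invtSubmodule : P.cyclicSubspace z ∈ P.invtSubmodule := by
  rw [cyclicSubspace, mem_invtSubmodule, span_le]
  rintro _ ⟨i, rfl⟩
  exact subset_span ⟨i + 1, by simp only [pow_succ', mul_apply]⟩

lemma cyclicSubspace_le_ker {n : ℕ} (hz : (P ^ n) z = 0) : P.cyclicSubspace z ≤ ker (P ^ n) := by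
  rw [cyclicSubspace, span_le]
  rintro _ ⟨i, rfl⟩
  rw [SetLike.mem_coe, mem_ker, ← mul_apply, ← pow_add, add_comm, pow_add, mul_apply, hz,
    map_zero]

lemma cyclicSubspace_eq_span_sup_map : P.cyclicSubspace z = K ∙ z ⊔ (P.cyclicSubspace z).map P := by
  have : Set.range (fun i : ℕ ↦ (P ^ i) z) = insert z (P '' Set.range fun i : ℕ ↦ (P ^ i) z) := by
    ext v
    constructor
    · rintro ⟨_ | i, rfl⟩
      · exact .inl (by simp)
      · exact .inr ⟨_, ⟨i, rfl⟩, by simp only [pow_succ', mul_apply]⟩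
    · rintro (rfl | ⟨_, ⟨i, rfl⟩, rfl⟩)
      · exact ⟨0, by simp⟩
      · exact ⟨i + 1, by simp only [pow_succ', mul_apply]⟩
  rw [cyclicSubspace, Submodule.map_span, ← span_insert, ← this]

variable {L : Submodule K V} {d : ℕ}

lemma mem_map_pow_cyclicSubspace (hL : L ∈ P.invtSubmodule) (hz : (P ^ (d + 1)) z = 0)
    (hzL : (P ^ d) z ∉ L) {j k : ℕ} (hjk : j + k = d + 1) {x : V}
    (hx : x ∈ P.cyclicSubspace z) (hxL : (P ^ j) x ∈ L) :
    x ∈ (P.cyclicSubspace z).map (P ^ k) := by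
  induction k generalizing j x with
  | zero => simpa [one_eq_id] using hx
  | succ k ih =>
    obtain ⟨y, hy, rfl⟩ :=
      ih (j := j + 1) (by omega) hx (by rw [pow_succ', mul_apply]; exact hL hxL)
    rw [cyclicSubspace_eq_span_sup_map] at hy
    obtain ⟨_, ha, _, ⟨y', hy', rfl⟩, rfl⟩ := mem_sup.1 hy
    obtain ⟨a, rfl⟩ := mem_span_singleton.1 ha
    have hjk' : j + k = d := by omega
    have hy'0 : (P ^ (d + 1)) y' = 0 := cyclicSubspace_le_ker hz hy'
    simp only [map_add, map_smul, ← mul_apply, ← pow_add, ← pow_succ, ← add_assoc, hjk', hy'0,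
      add_zero] at hxL
    obtain rfl : a = 0 := by
      by_contra ha
      exact hzL ((L.smul_mem_iff ha).1 hxL)
    exact ⟨y', hy', by rw [zero_smul, zero_add, pow_succ, mul_apply]⟩

lemma disjoint_cyclicSubspace (hL : L ∈ P.invtSubmodule) (hz : (P ^ (d + 1)) z = 0)
    (hzL : (P ^ d) z ∉ L) : Disjoint L (P.cyclicSubspace z) := by
  rw [disjoint_def]
  intro x hxL hx
  obtain ⟨y, hy, rfl⟩ := mem_map_pow_cyclicSubspace hL hz hzL (zero_add _) hx (by simpa using hxL)
  exact cyclicSubspace_le_ker hz hy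

lemma IsPure.sup_cyclicSubspace (hpure : P.IsPure L) (hL : L ∈ P.invtSubmodule)
    (hrange : LinearMap.range (P ^ (d + 1)) ≤ L) (hz : (P ^ (d + 1)) z = 0)
    (hzL : (P ^ d) z ∉ L) : P.IsPure (L ⊔ P.cyclicSubspace z) := by
  rintro k _ ⟨hv, v, rfl⟩
  rw [Submodule.map_sup]
  rcases le_or_gt k (d + 1) with hk | hk
  · obtain ⟨l, hl, x, hx, hlx⟩ := mem_sup.1 hv
    obtain ⟨j, hjk⟩ : ∃ j, j + k = d + 1 := ⟨d + 1 - k, by omega⟩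
    have hxL : (P ^ j) x ∈ L := by
      have : (P ^ j) x = (P ^ (d + 1)) v - (P ^ j) l := by
        rw [← hjk, pow_add, mul_apply, ← hlx, map_add, add_sub_cancel_left]
      rw [this]
      exact sub_mem (hrange (mem_range_self _ v)) (invtSubmodule.pow hL j hl)
    obtain ⟨c, hc, rfl⟩ := mem_map_pow_cyclicSubspace hL hz hzL hjk hx hxL
    have hvc : (P ^ k) (v - c) ∈ L ⊓ LinearMap.range (P ^ k) :=
      ⟨by rwa [map_sub, ← hlx, add_sub_cancel_right], mem_range_self _ _⟩
    obtain ⟨l', hl', he⟩ := hpure k hvc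
    exact mem_sup.2 ⟨_, ⟨l', hl', rfl⟩, _, ⟨c, hc, rfl⟩, by rw [he, map_sub, sub_add_cancel]⟩
  · obtain ⟨m, rfl⟩ : ∃ m, k = m + (d + 1) := ⟨k - (d + 1), by omega⟩
    have hvL : (P ^ (m + (d + 1))) v ∈ L := by
      rw [pow_add, mul_apply]
      exact invtSubmodule.pow hL m (hrange (mem_range_self _ v))
    exact mem_sup_left (hpure _ ⟨hvL, mem_range_self _ v⟩)

lemma IsPure.exists_pow_succ_apply_eq_zero (hpure : P.IsPure L) (hP : IsNilpotent P)
    (hL : L ∈ P.invtSubmodule) (hL_top : L ≠ ⊤) :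
    ∃ d z, LinearMap.range (P ^ (d + 1)) ≤ L ∧ (P ^ (d + 1)) z = 0 ∧ (P ^ d) z ∉ L := by
  obtain ⟨N, hN⟩ := hP
  obtain ⟨d, hd, hd₁⟩ := Nat.exists_not_and_succ_of_not_zero_of_exists
    (p := fun n ↦ LinearMap.range (P ^ n) ≤ L)
    (by rwa [pow_zero, one_eq_id, range_id, top_le_iff]) ⟨N, by simp [hN]⟩
  obtain ⟨_, ⟨v, rfl⟩, hv⟩ := SetLike.not_le_iff_exists.1 hd
  obtain ⟨l, hl, hlv⟩ := hpure (d + 1) ⟨hd₁ (mem_range_self _ v), mem_range_self _ v⟩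
  refine ⟨d, v - l, hd₁, by rw [map_sub, hlv, sub_self], fun h ↦ hv ?_⟩
  simpa using add_mem h (invtSubmodule.pow hL d hl)

theorem IsPure.exists_isCompl [FiniteDimensional K V] (hpure : P.IsPure L) (hP : IsNilpotent P)
    (hL : L ∈ P.invtSubmodule) : ∃ M ∈ P.invtSubmodule, IsCompl L M := by
  induction L using WellFoundedGT.induction with
  | _ L ih =>
  by_cases hL_top : L = ⊤
  · exact ⟨⊥, invtSubmodule.bot_mem _, hL_top ▸ isCompl_top_bot⟩
  obtain ⟨d, z, hrange, hz, hzL⟩ := hpure.exists_pow_succ_apply_eq_zero hP hL hL_top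
  have hlt : L < L ⊔ P.cyclicSubspace z :=
    left_lt_sup.2 fun h ↦ hzL (invtSubmodule.pow hL d (h self_mem_cyclicSubspace))
  obtain ⟨M, hM, hcompl⟩ := ih _ hlt (hpure.sup_cyclicSubspace hL hrange hz hzL)
    (invtSubmodule.sup_mem hL cyclicSubspace_mem_invtSubmodule)
  exact ⟨_, invtSubmodule.sup_mem cyclicSubspace_mem_invtSubmodule hM,
    (disjoint_cyclicSubspace hL hz hzL).isCompl_sup_right_of_isCompl_sup_left hcompl⟩

end Module.End

namespace LinearMap.BilinForm

variable {B : LinearMap.BilinForm K V}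

lemma orthogonal_sup (N N' : Submodule K V) :
    B.orthogonal (N ⊔ N') = B.orthogonal N ⊓ B.orthogonal N' := by
  refine le_antisymm (le_inf (orthogonal_le le_sup_left) (orthogonal_le le_sup_right)) ?_
  rintro v ⟨hN, hN'⟩ _ hx
  obtain ⟨n, hn, n', hn', rfl⟩ := mem_sup.1 hx
  rw [map_add, LinearMap.add_apply, hN n hn, hN' n' hn', add_zero]

lemma orthogonal_range_eq_ker (hB : B.SeparatingLeft) (hB₀ : B.IsRefl) {T : Module.End K V}
    (hT : IsAdjointPair B B T T) : B.orthogonal (LinearMap.range T) = ker T := by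
  ext v
  simp only [mem_orthogonal_iff, LinearMap.mem_range, forall_exists_index,
    forall_apply_eq_imp_iff, hT _ v, mem_ker]
  exact ⟨fun h ↦ hB _ fun u ↦ hB₀ _ _ (h u), fun h u ↦ by rw [h, map_zero]⟩

variable [FiniteDimensional K V]

lemma orthogonal_ker_eq_range (hB : B.Nondegenerate) (hB₀ : B.IsRefl) {T : Module.End K V}
    (hT : IsAdjointPair B B T T) : B.orthogonal (ker T) = LinearMap.range T := by
  rw [← orthogonal_range_eq_ker (hB₀.nondegenerate_iff_separatingLeft.1 hB) hB₀ hT,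
    orthogonal_orthogonal hB hB₀]

end LinearMap.BilinForm

def IsLagrangian (B : LinearMap.BilinForm K V) (L : Submodule K V) : Prop :=
  (∀ u ∈ L, ∀ v ∈ L, B u v = 0) ∧ 2 * finrank K L = finrank K V

namespace IsLagrangian

open LinearMap.BilinForm

variable [FiniteDimensional K V] {B : LinearMap.BilinForm K V} {L M : Submodule K V}

lemma orthogonal_eq (hL : IsLagrangian B L) (hB : B.Nondegenerate) : B.orthogonal L = L := by
  have hle : L ≤ B.orthogonal L := fun v hv n hn ↦ hL.1 n hn v hv
  refine (eq_of_le_of_finrank_le hle ?_).symm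
  rw [finrank_orthogonal hB]
  have := hL.2
  omega

lemma finrank_inf_range_add_finrank_sup_ker (hL : IsLagrangian B L) (hB : B.Nondegenerate)
    (hB₀ : B.IsRefl) {T : Module.End K V} (hT : IsAdjointPair B B T T) :
    finrank K ↥(L ⊓ LinearMap.range T) + finrank K ↥(L ⊔ ker T) = finrank K V := by
  have h : L ⊓ LinearMap.range T = B.orthogonal (L ⊔ ker T) := by
    rw [orthogonal_sup, hL.orthogonal_eq hB, orthogonal_ker_eq_range hB hB₀ hT]
  rw [h, finrank_orthogonal hB]
  have := (L ⊔ ker T).finrank_le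
  omega

lemma inf_range_le_map_iff (hL : IsLagrangian B L) (hB : B.Nondegenerate) (hB₀ : B.IsRefl)
    {T : Module.End K V} (hT : IsAdjointPair B B T T) (hLT : L ∈ T.invtSubmodule) :
    L ⊓ LinearMap.range T ≤ L.map T ↔ 2 * finrank K ↥(L ⊓ ker T) = finrank K (ker T) := by
  have hmap : L.map T ≤ L ⊓ LinearMap.range T :=
    le_inf (map_le_iff_le_comap.2 hLT) map_le_range
  have h₁ := hL.finrank_inf_range_add_finrank_sup_ker hB hB₀ hT
  have h₂ := L.finrank_map_add_finrank_inf_ker T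
  have h₃ := L.finrank_sup_add_finrank_inf_eq (ker T)
  have h₄ := hL.2
  constructor
  · intro h
    have := le_antisymm h hmap
    rw [this] at h₁
    omega
  · intro h
    refine (eq_of_le_of_finrank_le hmap ?_).ge
    omega

lemma isPure_iff (hL : IsLagrangian B L) (hB : B.Nondegenerate) (hB₀ : B.IsRefl)
    {P : Module.End K V} (hP : IsAdjointPair B B P P) (hLP : L ∈ P.invtSubmodule) :
    P.IsPure L ↔ ∀ k, 2 * finrank K ↥(L ⊓ ker (P ^ k)) = finrank K (ker (P ^ k)) :=
  forall_congr' fun k ↦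
    hL.inf_range_le_map_iff hB hB₀ (IsAdjointPair.pow hP k) (Module.End.invtSubmodule.pow hLP k)

lemma isPerfPair_domRestrict₁₂ (hL : IsLagrangian B L) (hB : B.Nondegenerate)
    (hLM : IsCompl L M) : (B.domRestrict₁₂ L M).IsPerfPair := by
  refine .of_injective ((injective_iff_map_eq_zero _).2 fun l hl ↦ ?_)
    ((injective_iff_map_eq_zero _).2 fun m hm ↦ ?_)
  · refine Subtype.ext (hB.1 l fun v ↦ ?_)
    obtain ⟨x, hx, n, hn, rfl⟩ := mem_sup.1 (hLM.codisjoint.eq_top ▸ mem_top : v ∈ L ⊔ M)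
    rw [map_add, hL.1 _ l.2 _ hx, zero_add]
    exact congr($hl ⟨n, hn⟩)
  · have hmL : (m : V) ∈ L ⊓ M :=
      ⟨hL.orthogonal_eq hB ▸ fun l hl ↦ congr($hm ⟨l, hl⟩), m.2⟩
    rw [hLM.inf_eq_bot, mem_bot] at hmL
    exact Subtype.ext hmL

theorem exists_isLagrangian_isCompl [NeZero (2 : K)] (hL : IsLagrangian B L)
    (hB : B.Nondegenerate) (hBalt : B.IsAlt) {P : Module.End K V} (hP : IsAdjointPair B B P P)
    (hLP : L ∈ P.invtSubmodule) (hMP : M ∈ P.invtSubmodule) (hLM : IsCompl L M) :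
    ∃ L', IsLagrangian B L' ∧ L' ∈ P.invtSubmodule ∧ IsCompl L L' := by
  have := hL.isPerfPair_domRestrict₁₂ hB hLM
  set p := B.domRestrict₁₂ L M
  let f : M →ₗ[K] L := p.toPerfPair.symm.toLinearMap ∘ₗ (-(2 : K)⁻¹ • B.domRestrict₁₂ M M)
  have hf (m m' : M) : B (f m) m' = -(2 : K)⁻¹ * B m m' := by
    change p (f m) m' = _
    simp [f, p, domRestrict₁₂_apply]
  have hfP (m : M) : P (f m) = f ⟨P m, hMP m.2⟩ := by
    have : (⟨P (f m), hLP (f m).2⟩ : L) = f ⟨P m, hMP m.2⟩ := by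
      refine (IsPerfPair.bijective_left p).1 (LinearMap.ext fun m' ↦ ?_)
      change B (P (f m)) m' = B (f _) m'
      rw [hP, hf m ⟨P m', hMP m'.2⟩, hf, ← hP]
    exact congr($this.1)
  have hcompl := isCompl_range_subtype_add_subtype_comp hLM f
  refine ⟨_, ⟨?_, ?_⟩, ?_, hcompl⟩
  · rintro _ ⟨m, rfl⟩ _ ⟨m', rfl⟩
    have h₁ := hf m m'
    have h₂ := hf m' m
    have h₃ := LinearMap.IsAlt.neg hBalt (f m') m
    have h₄ := LinearMap.IsAlt.neg hBalt m' m
    have h₅ := hL.1 _ (f m).2 _ (f m').2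
    have h₆ : (2 : K) * 2⁻¹ = 1 := mul_inv_cancel₀ two_ne_zero
    simp only [LinearMap.add_apply, coe_comp, coe_subtype, Function.comp_apply, map_add]
    linear_combination h₁ - h₂ - h₃ - 2⁻¹ * h₄ + h₅ - B m m' * h₆
  · have := finrank_add_eq_of_isCompl hcompl
    have := hL.2
    omega
  · rintro _ ⟨m, rfl⟩
    exact ⟨⟨P m, hMP m.2⟩, by simp [hfP]⟩

end IsLagrangian

end

open Module.End

/-- **Complementary bi-Lagrangian subspaces exist exactly for generic ones.**
Let `B` be a nondegenerate alternating bilinear form on a finite-dimensional complex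
vector space `V` and `P` nilpotent, self-adjoint with respect to `B`.  Then:
(a) if `L`, `L′` are `P`-invariant Lagrangian subspaces with `L ⊓ L′ = ⊥`, then
`2 · dim (L ⊓ ker P^k) = dim ker P^k` for every `k`; (b) conversely, if a
`P`-invariant Lagrangian `L` satisfies `2 · dim (L ⊓ ker P^k) = dim ker P^k` for
every `k`, then there is a `P`-invariant Lagrangian `L′` with `L ⊓ L′ = ⊥`. -/
theorem complementary_biLagrangian_iff_generic
    {V : Type*} [AddCommGroup V] [Module ℂ V] [FiniteDimensional ℂ V]
    (B : V →ₗ[ℂ] V →ₗ[ℂ] ℂ)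
    (hBalt : ∀ v, B v v = 0)
    (hBnd : ∀ v, (∀ u, B v u = 0) → v = 0)
    (P : V →ₗ[ℂ] V)
    (hPsa : ∀ u v, B (P u) v = B u (P v))
    (hPnil : IsNilpotent P) :
    (∀ L L' : Submodule ℂ V,
      IsPInvLagrangian B P L → IsPInvLagrangian B P L' → L ⊓ L' = ⊥ →
      ∀ k : ℕ, 2 * finrank ℂ ↥(L ⊓ LinearMap.ker (P ^ k)) =
        finrank ℂ (LinearMap.ker (P ^ k))) ∧
    (∀ L : Submodule ℂ V, IsPInvLagrangian B P L →
      (∀ k : ℕ, 2 * finrank ℂ ↥(L ⊓ LinearMap.ker (P ^ k)) =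
        finrank ℂ (LinearMap.ker (P ^ k))) →
      ∃ L' : Submodule ℂ V, IsPInvLagrangian B P L' ∧ L ⊓ L' = ⊥) := by
  have hB₀ : B.IsRefl := IsAlt.isRefl hBalt
  have hB : B.Nondegenerate := hB₀.nondegenerate_iff_separatingLeft.2 hBnd
  refine ⟨fun L L' ⟨hLiso, hLdim, hLP⟩ ⟨_, hL'dim, hL'P⟩ hLL' ↦ ?_,
    fun L ⟨hLiso, hLdim, hLP⟩ hgen ↦ ?_⟩
  · have hLL'c : IsCompl L L' :=
      (isCompl_iff_disjoint _ _ (by omega)).2 (disjoint_iff.2 hLL')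
    exact (IsLagrangian.isPure_iff ⟨hLiso, hLdim⟩ hB hB₀ hPsa hLP).1
      (IsPure.of_isCompl hLP hL'P hLL'c)
  · have hL : IsLagrangian B L := ⟨hLiso, hLdim⟩
    obtain ⟨M, hMP, hLM⟩ := ((hL.isPure_iff hB hB₀ hPsa hLP).2 hgen).exists_isCompl hPnil hLP
    obtain ⟨L', ⟨hL'iso, hL'dim⟩, hL'P, hLL'⟩ :=
      hL.exists_isLagrangian_isCompl hB hBalt hPsa hLP hMP hLM
    exact ⟨L', ⟨hL'iso, hL'dim, hL'P⟩, hLL'.inf_eq_bot⟩
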